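/- In the setting of the previous statement, the following are equivalent for V ∈ Rep_F(G): (a) the natural map F ⊗_L V^H → V is an isomorphism; (b) F·V^H = V; (c) rank_L(V^H) = rank_F(V). -/

import Mathlib

set_option synthInstance.maxHeartbeats 1000000
set_option maxHeartbeats 1000000

section Setup

variable {I : Type*} [DecidableEq I] {L : I → Type*} [∀ i, Field (L i)]
variable {G : Type*} [Group G] [MulSemiringAction G (∀ i, L i)]
variable (H : Subgroup G)
variable {V : Type*} [AddCommGroup V] [Module (∀ i, L i) V]
variable (μ : G →* Multiplicative (AddAut V))

/-- The fixed subring `L = F^H` of the product of fields `F = ∏ᵢ Lᵢ`. -/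
def fixedSubring : Subring (∀ i, L i) where
  carrier := {x | ∀ h ∈ H, h • x = x}
  mul_mem' := by intro a b ha hb h hh; rw [smul_mul', ha h hh, hb h hh]
  one_mem' := by intro h hh; rw [smul_one]
  add_mem' := by intro a b ha hb h hh; rw [smul_add, ha h hh, hb h hh]
  zero_mem' := by intro h hh; rw [smul_zero]
  neg_mem' := by intro a ha h hh; rw [smul_neg, ha h hh]

variable (hsemi : ∀ (g : G) (a : ∀ i, L i) (v : V), Multiplicative.toAdd (μ g) (a • v) = (g • a) • Multiplicative.toAdd (μ g) v)

/-- The `H`-invariants `V^H` of `V`, as a module over `L = F^H`. -/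
def invariants : Submodule (fixedSubring (L := L) H) V where
  carrier := {v | ∀ h ∈ H, Multiplicative.toAdd (μ h) v = v}
  add_mem' := by intro a b ha hb h hh; rw [map_add, ha h hh, hb h hh]
  zero_mem' := by intro h hh; exact map_zero (Multiplicative.toAdd (μ h))
  smul_mem' := by
    intro c v hv h hh
    show Multiplicative.toAdd (μ h) ((c : ∀ i, L i) • v) = _
    rw [hsemi h c v, c.2 h hh, hv h hh]; rfl

noncomputable instance : Algebra (fixedSubring (L := L) H) (∀ i, L i) :=
  (fixedSubring (L := L) H).subtype.toAlgebra

/-- The natural map `F ⊗_L V^H → V`, `f ⊗ v ↦ f • v`. -/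
noncomputable def natMap :
    TensorProduct (fixedSubring (L := L) H) (∀ i, L i) (invariants H μ hsemi)
      →ₗ[fixedSubring (L := L) H] V :=
  TensorProduct.lift
    { toFun := fun a =>
        { toFun := fun w => a • (w : V)
          map_add' := by intro w w'; simp
          map_smul' := by
            intro c w
            show a • ((c : ∀ i, L i) • (w : V)) = (c : ∀ i, L i) • (a • (w : V))
            rw [smul_comm] }
      map_add' := by intro a a'; ext w; simp [add_smul]
      map_smul' := by
        intro c a; ext w
        show ((c : ∀ i, L i) * a) • (w : V) = (c : ∀ i, L i) • (a • (w : V))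
        rw [mul_smul] }

end Setup

section Aux
variable {I : Type*} [DecidableEq I] {L : I → Type*} [∀ i, Field (L i)]
variable {G : Type*} [Group G] [MulSemiringAction G (∀ i, L i)]

lemma single_mul_single (i : I) (a c : L i) :
    (Pi.single i a : ∀ i, L i) * Pi.single i c = Pi.single i (a * c) := by
  ext j
  rcases eq_or_ne j i with rfl | hj
  · simp
  · simp [Pi.single_eq_of_ne hj]

lemma single_one_mul_eq_self_iff (i : I) (x : ∀ i, L i) :
    (Pi.single i 1 : ∀ i, L i) * x = x ↔ ∀ j ≠ i, x j = 0 := by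
  constructor
  · intro h j hj
    have := congrFun h j
    simpa [Pi.single_eq_of_ne hj] using this.symm
  · intro h
    ext j
    rcases eq_or_ne j i with rfl | hj
    · simp
    · simp [Pi.single_eq_of_ne hj, h j hj]

lemma exists_smul_single (g : G) (i : I) :
    ∃ k : I, g • (Pi.single i 1 : ∀ i, L i) = Pi.single k 1 := by
  set x := g • (Pi.single i 1 : ∀ i, L i) with hxdef
  have hsingle_ne : (Pi.single i 1 : ∀ i, L i) ≠ 0 := by
    intro h
    have := congrFun h i
    simp at this
  have hx2 : x * x = x := by
    rw [hxdef, ← smul_mul', single_mul_single, one_mul]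
  have hx01 : ∀ j, x j = 0 ∨ x j = 1 := by
    intro j
    rcases eq_or_ne (x j) 0 with h | h
    · exact Or.inl h
    · right
      have := congrFun hx2 j
      exact mul_left_cancel₀ h (by rw [mul_one]; exact this)
  have hx0 : x ≠ 0 := by
    intro h
    apply hsingle_ne
    have := congrArg (fun z => g⁻¹ • z) h
    simpa [hxdef, smul_smul] using this
  obtain ⟨k, hk⟩ : ∃ k, x k ≠ 0 := by
    by_contra hc
    push_neg at hc
    exact hx0 (funext hc)
  have hk1 : x k = 1 := (hx01 k).resolve_left hk
  refine ⟨k, ?_⟩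
  ext j
  rcases eq_or_ne j k with rfl | hj
  · simpa using hk1
  · simp only [Pi.single_eq_of_ne hj]
    by_contra hxj
    have hxj1 : x j = 1 := (hx01 j).resolve_left hxj
    -- y := g⁻¹ • single j 1
    set y := g⁻¹ • (Pi.single j 1 : ∀ i, L i) with hydef
    have hy : y * (Pi.single i 1 : ∀ i, L i) = y := by
      have h1 : (Pi.single j 1 : ∀ i, L i) * x = Pi.single j 1 := by
        ext m
        rcases eq_or_ne m j with rfl | hm
        · simp [hxj1]
        · simp [Pi.single_eq_of_ne hm]
      have : g • (y * Pi.single i 1) = g • y := by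
        rw [smul_mul', hydef, smul_inv_smul, ← hxdef, h1]
      exact smul_left_cancel g this
    have hysupp : ∀ m ≠ i, y m = 0 := by
      intro m hm
      have := congrFun hy m
      simpa [Pi.single_eq_of_ne (hm)] using this.symm
    have hy0 : y ≠ 0 := by
      intro h
      rw [hydef] at h
      have := congrArg (fun z => g • z) h
      simp only [smul_inv_smul, smul_zero] at this
      have := congrFun this j
      simp at this
    have hyi : y i ≠ 0 := by
      intro h
      apply hy0
      ext m
      rcases eq_or_ne m i with rfl | hm
      · simpa using h
      · simpa using hysupp m hm
    have hy2 : y * y = y := by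
      rw [hydef, ← smul_mul', single_mul_single, one_mul]
    have hyi1 : y i = 1 := by
      have := congrFun hy2 i
      exact mul_left_cancel₀ hyi (by rw [mul_one]; exact this)
    have hyeq : y = Pi.single i 1 := by
      ext m
      rcases eq_or_ne m i with rfl | hm
      · simpa using hyi1
      · simp [Pi.single_eq_of_ne hm, hysupp m hm]
    have : (Pi.single j 1 : ∀ i, L i) = x := by
      rw [hxdef, ← hyeq, hydef, smul_inv_smul]
    have := congrFun this k
    rw [hk1, Pi.single_eq_of_ne (Ne.symm hj)] at this
    exact zero_ne_one this

/-- the permutation of coordinates induced by `g`. -/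
noncomputable def sigmaIdx (g : G) (i : I) : I := (exists_smul_single (L := L) g i).choose

lemma sigmaIdx_spec (g : G) (i : I) :
    g • (Pi.single i 1 : ∀ i, L i) = Pi.single (sigmaIdx (L := L) g i) 1 :=
  (exists_smul_single (L := L) g i).choose_spec

end Aux

section Aux2
variable {I : Type*} [DecidableEq I] {L : I → Type*} [∀ i, Field (L i)]
variable {V : Type*} [AddCommGroup V] [Module (∀ i, L i) V] {r : ℕ}

/-- The `i`-th component of `v` in coordinates w.r.t. the basis `b`. -/
noncomputable def pc (b : Module.Basis (Fin r) (∀ i, L i) V) (i : I) (v : V) : Fin r → L i :=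
  fun k => b.repr v k i

lemma pc_add (b : Module.Basis (Fin r) (∀ i, L i) V) (i : I) (v w : V) :
    pc b i (v + w) = pc b i v + pc b i w := by
  funext k; simp [pc]

lemma pc_smul (b : Module.Basis (Fin r) (∀ i, L i) V) (i : I) (a : ∀ i, L i) (v : V) :
    pc b i (a • v) = a i • pc b i v := by
  funext k
  simp [pc, Finsupp.smul_apply]

lemma pc_zero (b : Module.Basis (Fin r) (∀ i, L i) V) (i : I) : pc b i (0 : V) = 0 := by
  funext k; simp [pc]

lemma pc_eq_zero_iff (b : Module.Basis (Fin r) (∀ i, L i) V) (i : I) (v : V) :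
    pc b i v = 0 ↔ (Pi.single i 1 : ∀ i, L i) • v = 0 := by
  constructor
  · intro h
    have h' : ∀ k, b.repr v k i = 0 := fun k => congrFun h k
    have : b.repr ((Pi.single i 1 : ∀ i, L i) • v) = 0 := by
      rw [map_smul]
      refine Finsupp.ext fun k => ?_
      rw [Finsupp.smul_apply]
      show ((Pi.single i 1 : ∀ i, L i) * b.repr v k) = 0
      funext j
      show ((Pi.single i 1 : ∀ i, L i) * b.repr v k) j = 0
      rcases eq_or_ne j i with rfl | hj
      · simp [Pi.mul_apply, h' k]
      · simp [Pi.mul_apply, Pi.single_eq_of_ne hj]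
    simpa using congrArg b.repr.symm this
  · intro h
    funext k
    have := congrArg (fun z => b.repr z k i) h
    simp only [map_smul, Finsupp.smul_apply] at this
    show b.repr v k i = 0
    simpa [pc] using this

lemma pc_single_smul (b : Module.Basis (Fin r) (∀ i, L i) V) (i : I) (v : V) :
    pc b i ((Pi.single i 1 : ∀ i, L i) • v) = pc b i v := by
  funext k
  show b.repr _ k i = _
  rw [map_smul, Finsupp.smul_apply]
  show ((Pi.single i 1 : ∀ i, L i) * b.repr v k) i = _
  simp [pc]

lemma pc_sum {ι : Type*} (b : Module.Basis (Fin r) (∀ i, L i) V) (i : I) (s : Finset ι) (f : ι → V) :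
    pc b i (∑ t ∈ s, f t) = ∑ t ∈ s, pc b i (f t) := by
  classical
  induction s using Finset.induction_on with
  | empty => simp [pc_zero]
  | insert a s' h ih => simp [Finset.sum_insert h, pc_add, ih]

/-- An `F`-linearly independent family of size `r` in a free module of rank `r`
over `F = ∏ᵢ Lᵢ` spans. -/
lemma span_top_of_linearIndependent (b : Module.Basis (Fin r) (∀ i, L i) V)
    (w : Fin r → V) (hw : LinearIndependent (∀ i, L i) w) :
    Submodule.span (∀ i, L i) (Set.range w) = ⊤ := by
  classical
  set F := ∀ i, L i
  let φ : (Fin r → F) →ₗ[F] V :=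
    { toFun := fun x => ∑ j, x j • w j
      map_add' := by intro x y; simp [add_smul, Finset.sum_add_distrib]
      map_smul' := by intro c x; simp [mul_smul, Finset.smul_sum] }
  have hφinj : Function.Injective φ := by
    rw [injective_iff_map_eq_zero]
    intro x hx
    have := (Fintype.linearIndependent_iff.mp hw) x hx
    funext j; exact this j
  -- componentwise maps
  have hsingle_tilde : ∀ (i : I) (y : Fin r → L i),
      ∀ j, (Pi.single i 1 : F) * (Pi.single i (y j) : F) = Pi.single i (y j) := by
    intro i y j; rw [single_mul_single, one_mul]
  let T : ∀ i : I, (Fin r → L i) →ₗ[L i] (Fin r → L i) := fun i =>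
    { toFun := fun y => pc b i (φ (fun j => (Pi.single i (y j) : F)))
      map_add' := by
        intro y z
        have h1 : (fun j => (Pi.single i ((y + z) j) : ∀ i, L i)) =
            (fun j => (Pi.single i (y j) : ∀ i, L i)) +
              (fun j => (Pi.single i (z j) : ∀ i, L i)) := by
          funext j
          show (Pi.single i (y j + z j) : ∀ i, L i) = _
          rw [Pi.single_add]
          rfl
        show pc b i (φ fun j => (Pi.single i ((y + z) j) : ∀ i, L i)) = _
        rw [h1, map_add, pc_add]
      map_smul' := by
        intro c y
        show pc b i (φ fun j => (Pi.single i (c * y j) : F)) = c • pc b i (φ _)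
        have : (fun j => (Pi.single i (c * y j) : F)) =
            (Pi.single i c : F) • fun j => (Pi.single i (y j) : F) := by
          funext j
          show _ = (Pi.single i c : F) * Pi.single i (y j)
          rw [single_mul_single]
        rw [this, map_smul, pc_smul]
        simp }
  have hTinj : ∀ i, Function.Injective (T i) := by
    intro i
    rw [injective_iff_map_eq_zero]
    intro y hy
    have h1 : (Pi.single i 1 : F) • φ (fun j => (Pi.single i (y j) : F)) = 0 :=
      (pc_eq_zero_iff b i _).mp hy
    have h2 : (Pi.single i 1 : F) • φ (fun j => (Pi.single i (y j) : F)) =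
        φ (fun j => (Pi.single i (y j) : F)) := by
      rw [← map_smul]
      congr 1
      funext j
      show (Pi.single i 1 : F) * _ = _
      exact hsingle_tilde i y j
    have h3 : φ (fun j => (Pi.single i (y j) : F)) = 0 := by rw [← h2, h1]
    have h4 := hφinj (by rw [h3, map_zero] : φ _ = φ 0)
    funext j
    have := congrFun h4 j
    have := congrFun this i
    simp at this; exact this
  have hTsurj : ∀ i, Function.Surjective (T i) := fun i =>
    (LinearMap.injective_iff_surjective).mp (hTinj i)
  -- surjectivity of φ
  have hφsurj : Function.Surjective φ := by
    intro v
    have hy : ∀ i : I, ∃ y : Fin r → L i, T i y = pc b i v := fun i => hTsurj i _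
    choose y hy using hy
    refine ⟨fun j i => y i j, ?_⟩
    apply b.repr.injective
    refine Finsupp.ext fun k => ?_
    funext i
    have key : (Pi.single i 1 : F) • φ (fun j i => y i j) =
        (Pi.single i 1 : F) • φ (fun j => (Pi.single i (y i j) : F)) := by
      rw [← map_smul, ← map_smul]
      congr 1
      funext j
      show (Pi.single i 1 : F) * (fun i => y i j) = (Pi.single i 1 : F) * _
      ext m
      rcases eq_or_ne m i with rfl | hm
      · simp
      · simp [Pi.single_eq_of_ne hm]
    have e1 : pc b i (φ fun j i => y i j) = pc b i (φ fun j => (Pi.single i (y i j) : F)) := by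
      rw [← pc_single_smul b i (φ fun j i => y i j), key, pc_single_smul]
    have : pc b i (φ fun j i => y i j) = pc b i v := by
      rw [e1]; exact hy i
    exact congrFun this k
  rw [Submodule.eq_top_iff']
  intro v
  obtain ⟨x, rfl⟩ := hφsurj v
  show (∑ j, x j • w j) ∈ _
  exact Submodule.sum_mem _ fun j _ =>
    Submodule.smul_mem _ _ (Submodule.subset_span (Set.mem_range_self j))

end Aux2

section ArtinAux
variable {I : Type*} [DecidableEq I] {L : I → Type*} [∀ i, Field (L i)]

lemma single_one_mul (i : I) (x : ∀ i, L i) :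
    (Pi.single i 1 : ∀ i, L i) * x = Pi.single i (x i) := by
  ext j
  rcases eq_or_ne j i with rfl | hj
  · simp [Pi.mul_apply]
  · simp [Pi.mul_apply, Pi.single_eq_of_ne hj]

lemma single_injective' (i : I) {a c : L i} (h : (Pi.single i a : ∀ i, L i) = Pi.single i c) :
    a = c := by
  have := congrFun h i
  simpa using this

end ArtinAux

section Artin
variable {I : Type*} [DecidableEq I] {L : I → Type*} [∀ i, Field (L i)]
variable {G : Type*} [Group G] [MulSemiringAction G (∀ i, L i)]
variable {H : Subgroup G}
variable {V : Type*} [AddCommGroup V] [Module (∀ i, L i) V]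
variable {μ : G →* Multiplicative (AddAut V)}

/-- Artin-type lemma: a family of `H`-invariant vectors which is linearly independent
over `L = F^H` is linearly independent over `F`. -/
lemma artin {ι : Type*}
    (hsemi : ∀ (g : G) (a : ∀ i, L i) (v : V), Multiplicative.toAdd (μ g) (a • v) = (g • a) • Multiplicative.toAdd (μ g) v)
    (hinj : ∀ v : V, (∀ i : I, (Pi.single i (1 : L i) : ∀ i, L i) • v = 0) → v = 0)
    (w : ι → V) (hw : ∀ t, ∀ h ∈ H, Multiplicative.toAdd (μ h) (w t) = w t)
    (hli : LinearIndependent (↥(fixedSubring (L := L) H)) w) :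
    LinearIndependent (∀ i, L i) w := by
  classical
  rw [linearIndependent_iff'] at hli ⊢
  intro s a hrel t₀ ht₀
  funext i
  show a t₀ i = 0
  by_contra hne
  -- relations with coefficients concentrated at coordinate `i`
  set Rel : (ι → L i) → Prop := fun y =>
    (∀ t ∉ s, y t = 0) ∧ ∑ t ∈ s, (Pi.single i (y t) : ∀ i, L i) • w t = 0 with hReldef
  set N : (ι → L i) → ℕ := fun y => (s.filter fun t => y t ≠ 0).card with hNdef
  -- the base relation coming from `a`
  have hbase : Rel (fun t => if t ∈ s then a t i else 0) := by
    constructor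
    · intro t ht; simp [ht]
    · have : ∀ t ∈ s, (Pi.single i (if t ∈ s then a t i else 0) : ∀ i, L i) • w t
          = (Pi.single i 1 : ∀ i, L i) • (a t • w t) := by
        intro t ht
        rw [if_pos ht, smul_smul, single_one_mul]
      rw [Finset.sum_congr rfl this, ← Finset.smul_sum, hrel, smul_zero]
  have hbasene : (fun t => if t ∈ s then a t i else 0) ≠ 0 := by
    intro h
    have := congrFun h t₀
    rw [if_pos ht₀] at this
    exact hne this
  have hP : ∃ n, ∃ y, Rel y ∧ y ≠ 0 ∧ N y = n :=
    ⟨_, _, hbase, hbasene, rfl⟩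
  obtain ⟨y, hyRel, hyne, hyN⟩ := Nat.find_spec hP
  have hmin : ∀ n < Nat.find hP, ¬ ∃ y, Rel y ∧ y ≠ 0 ∧ N y = n := fun n h => Nat.find_min hP h
  obtain ⟨t₁, ht₁⟩ : ∃ t₁, y t₁ ≠ 0 := by
    by_contra hc
    push_neg at hc
    exact hyne (funext hc)
  have ht₁s : t₁ ∈ s := by
    by_contra hc
    exact ht₁ (hyRel.1 t₁ hc)
  -- normalize
  set y1 : ι → L i := fun t => (y t₁)⁻¹ * y t with hy1def
  have hy1Rel : Rel y1 := by
    constructor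
    · intro t ht
      rw [hy1def]
      simp [hyRel.1 t ht]
    · have : ∀ t ∈ s, (Pi.single i (y1 t) : ∀ i, L i) • w t
          = (Pi.single i ((y t₁)⁻¹) : ∀ i, L i) • ((Pi.single i (y t) : ∀ i, L i) • w t) := by
        intro t _
        rw [smul_smul, single_mul_single]
      rw [Finset.sum_congr rfl this, ← Finset.smul_sum, hyRel.2, smul_zero]
  have hy1t₁ : y1 t₁ = 1 := inv_mul_cancel₀ ht₁
  have hy1zero : ∀ t, y1 t = 0 ↔ y t = 0 := by
    intro t
    rw [hy1def]
    simp only [mul_eq_zero, inv_eq_zero]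
    constructor
    · rintro (h | h)
      · exact absurd h ht₁
      · exact h
    · exact Or.inr
  have hy1N : N y1 = Nat.find hP := by
    rw [← hyN]
    show (s.filter fun t => y1 t ≠ 0).card = (s.filter fun t => y t ≠ 0).card
    congr 1
    apply Finset.filter_congr
    intro t _
    simp only [ne_eq]
    rw [hy1zero t]
  have hy1ne : y1 ≠ 0 := by
    intro h
    have := congrFun h t₁
    rw [hy1t₁] at this
    exact one_ne_zero this
  -- stabilizer invariance of the minimal relation
  have hstab : ∀ h ∈ H, h • (Pi.single i 1 : ∀ i, L i) = Pi.single i 1 →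
      ∀ t, h • (Pi.single i (y1 t) : ∀ i, L i) = Pi.single i (y1 t) := by
    intro h hh hfix
    set z : ι → L i := fun t => (h • (Pi.single i (y1 t) : ∀ i, L i)) i with hzdef
    have hzsingle : ∀ t, h • (Pi.single i (y1 t) : ∀ i, L i) = Pi.single i (z t) := by
      intro t
      have h0 : (Pi.single i (y1 t) : ∀ i, L i) = Pi.single i 1 * Pi.single i (y1 t) := by
        rw [single_mul_single, one_mul]
      have h1 : h • (Pi.single i (y1 t) : ∀ i, L i)
          = (Pi.single i 1 : ∀ i, L i) * (h • (Pi.single i (y1 t) : ∀ i, L i)) := by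
        calc h • (Pi.single i (y1 t) : ∀ i, L i)
            = h • ((Pi.single i 1 : ∀ i, L i) * Pi.single i (y1 t)) := by rw [← h0]
        _ = (h • (Pi.single i 1 : ∀ i, L i)) * (h • (Pi.single i (y1 t) : ∀ i, L i)) :=
              smul_mul' h _ _
        _ = _ := by rw [hfix]
      rw [h1, single_one_mul]
    have hrelz : ∑ t ∈ s, (Pi.single i (z t) : ∀ i, L i) • w t = 0 := by
      have : ∀ t ∈ s, (Pi.single i (z t) : ∀ i, L i) • w t
          = Multiplicative.toAdd (μ h) ((Pi.single i (y1 t) : ∀ i, L i) • w t) := by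
        intro t ht
        rw [hsemi h _ (w t), hw t h hh, hzsingle t]
      rw [Finset.sum_congr rfl this, ← map_sum, hy1Rel.2, map_zero]
    have hzzero : ∀ t, z t = 0 ↔ y1 t = 0 := by
      intro t
      constructor
      · intro h0
        have : h • (Pi.single i (y1 t) : ∀ i, L i) = 0 := by
          rw [hzsingle t, h0]
          simp
        have := smul_left_cancel h (by rw [this, smul_zero] :
          h • (Pi.single i (y1 t) : ∀ i, L i) = h • (0 : ∀ i, L i))
        have := congrFun this i
        simpa using this
      · intro h0
        rw [hzdef]
        simp [h0]
    have hzt₁ : z t₁ = 1 := by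
      apply single_injective' i
      rw [← hzsingle t₁, hy1t₁, hfix]
    -- the difference relation must vanish
    have hd : z - y1 = 0 := by
      by_contra hdne
      have hdRel : Rel (z - y1) := by
        constructor
        · intro t ht
          have hy0 := hyRel.1 t ht
          have : y1 t = 0 := (hy1zero t).mpr hy0
          simp [Pi.sub_apply, this, (hzzero t).mpr this]
        · have : ∀ t ∈ s, (Pi.single i ((z - y1) t) : ∀ i, L i) • w t
              = (Pi.single i (z t) : ∀ i, L i) • w t
                - (Pi.single i (y1 t) : ∀ i, L i) • w t := by
            intro t _
            rw [Pi.sub_apply, Pi.single_sub, sub_smul]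
          rw [Finset.sum_congr rfl this, Finset.sum_sub_distrib, hrelz, hy1Rel.2, sub_zero]
      have hdsub : (s.filter fun t => (z - y1) t ≠ 0) ⊆
          (s.filter fun t => y1 t ≠ 0).erase t₁ := by
        intro t ht
        rw [Finset.mem_filter] at ht
        rw [Finset.mem_erase, Finset.mem_filter]
        refine ⟨?_, ht.1, ?_⟩
        · intro h0
          subst h0
          apply ht.2
          simp [Pi.sub_apply, hzt₁, hy1t₁]
        · intro h0
          apply ht.2
          simp [Pi.sub_apply, h0, (hzzero t).mpr h0]
      have hcard : N (z - y1) < Nat.find hP := by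
        calc N (z - y1) ≤ ((s.filter fun t => y1 t ≠ 0).erase t₁).card :=
              Finset.card_le_card hdsub
        _ < (s.filter fun t => y1 t ≠ 0).card := by
              apply Finset.card_erase_lt_of_mem
              rw [Finset.mem_filter]
              exact ⟨ht₁s, by rw [hy1t₁]; exact one_ne_zero⟩
        _ = Nat.find hP := hy1N
      exact hmin _ hcard ⟨z - y1, hdRel, hdne, rfl⟩
    intro t
    rw [hzsingle t]
    have h0 := congrFun hd t
    simp only [Pi.sub_apply, Pi.zero_apply] at h0
    rw [sub_eq_zero.mp h0]
  -- spreading the coefficients to H-invariant elements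
  set ex : I → Prop := fun k => ∃ h, h ∈ H ∧
      h • (Pi.single i 1 : ∀ i, L i) = Pi.single k 1 with hexdef
  set x : ι → ∀ i, L i := fun t k =>
    if hk : ex k then ((hk.choose) • (Pi.single i (y1 t) : ∀ i, L i)) k else 0 with hxdef
  have hF1 : ∀ (t : ι) (k : I) (h : G), h ∈ H →
      h • (Pi.single i 1 : ∀ i, L i) = Pi.single k 1 →
      (Pi.single k 1 : ∀ i, L i) * x t = h • (Pi.single i (y1 t) : ∀ i, L i) := by
    intro t k h hh hsm
    have hk : ex k := ⟨h, hh, hsm⟩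
    have h₀h : hk.choose ∈ H ∧ hk.choose • (Pi.single i 1 : ∀ i, L i) = Pi.single k 1 :=
      hk.choose_spec
    set h₀ := hk.choose with hh₀def
    have hsame : h₀ • (Pi.single i (y1 t) : ∀ i, L i)
        = h • (Pi.single i (y1 t) : ∀ i, L i) := by
      have hs'H : h⁻¹ * h₀ ∈ H := H.mul_mem (H.inv_mem hh) h₀h.1
      have hs'fix : (h⁻¹ * h₀) • (Pi.single i 1 : ∀ i, L i) = Pi.single i 1 := by
        rw [mul_smul, h₀h.2, ← hsm, inv_smul_smul]
      have := hstab (h⁻¹ * h₀) hs'H hs'fix t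
      calc h₀ • (Pi.single i (y1 t) : ∀ i, L i)
          = h • ((h⁻¹ * h₀) • (Pi.single i (y1 t) : ∀ i, L i)) := by
            rw [← mul_smul, mul_inv_cancel_left]
      _ = h • (Pi.single i (y1 t) : ∀ i, L i) := by rw [this]
    have hu : h • (Pi.single i (y1 t) : ∀ i, L i)
        = (Pi.single k 1 : ∀ i, L i) * (h • (Pi.single i (y1 t) : ∀ i, L i)) := by
      have h0 : (Pi.single i (y1 t) : ∀ i, L i) = Pi.single i 1 * Pi.single i (y1 t) := by
        rw [single_mul_single, one_mul]
      calc h • (Pi.single i (y1 t) : ∀ i, L i)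
          = h • ((Pi.single i 1 : ∀ i, L i) * Pi.single i (y1 t)) := by rw [← h0]
      _ = (h • (Pi.single i 1 : ∀ i, L i)) * (h • (Pi.single i (y1 t) : ∀ i, L i)) :=
            smul_mul' h _ _
      _ = _ := by rw [hsm]
    have hxtk : x t k = (h • (Pi.single i (y1 t) : ∀ i, L i)) k := by
      rw [hxdef]
      simp only [dif_pos hk]
      rw [← hh₀def, hsame]
    rw [single_one_mul k (x t), hxtk]
    conv_rhs => rw [hu, single_one_mul]
  have hF2 : ∀ (t : ι) (k : I), ¬ ex k → (Pi.single k 1 : ∀ i, L i) * x t = 0 := by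
    intro t k hk
    rw [single_one_mul k (x t)]
    have : x t k = 0 := by rw [hxdef]; simp [dif_neg hk]
    rw [this]
    simp
  have hF3 : ∀ t, x t ∈ fixedSubring (L := L) H := by
    intro t h hh
    have key : ∀ k : I, (Pi.single k 1 : ∀ i, L i) * (h • x t)
        = (Pi.single k 1 : ∀ i, L i) * x t := by
      intro k
      set k' := sigmaIdx (L := L) h⁻¹ k with hk'def
      have hσ : h⁻¹ • (Pi.single k 1 : ∀ i, L i) = Pi.single k' 1 := sigmaIdx_spec h⁻¹ k
      have hstep : (Pi.single k 1 : ∀ i, L i) * (h • x t)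
          = h • ((Pi.single k' 1 : ∀ i, L i) * x t) := by
        rw [smul_mul', ← hσ, smul_inv_smul]
      by_cases hex' : ex k'
      · obtain ⟨h', hh', hsm'⟩ := hex'
        have hk1 : h • (Pi.single k' 1 : ∀ i, L i) = Pi.single k 1 := by
          rw [← hσ, smul_inv_smul]
        have hcomp : (h * h') • (Pi.single i 1 : ∀ i, L i) = Pi.single k 1 := by
          rw [mul_smul, hsm', hk1]
        rw [hstep, hF1 t k' h' hh' hsm', ← mul_smul,
          hF1 t k (h * h') (H.mul_mem hh hh') hcomp]
      · have hexk : ¬ ex k := by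
          intro hek
          obtain ⟨h'', hh'', hsm''⟩ := hek
          exact hex' ⟨h⁻¹ * h'', H.mul_mem (H.inv_mem hh) hh'', by
            rw [mul_smul, hsm'', hσ]⟩
        rw [hstep, hF2 t k' hex', smul_zero, hF2 t k hexk]
    funext k
    have := congrFun (key k) k
    simpa [single_one_mul] using this
  have hF4 : ∀ t, x t i = y1 t := by
    intro t
    have h1 : (1 : G) • (Pi.single i 1 : ∀ i, L i) = Pi.single i 1 := one_smul _ _
    have := hF1 t i 1 H.one_mem h1
    rw [one_smul] at this
    have := congrFun this i
    simpa [single_one_mul] using this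
  have hF5 : ∑ t ∈ s, x t • w t = 0 := by
    apply hinj
    intro k
    rw [Finset.smul_sum]
    by_cases hk : ex k
    · obtain ⟨h, hh, hsm⟩ := hk
      have : ∀ t ∈ s, (Pi.single k 1 : ∀ i, L i) • (x t • w t)
          = Multiplicative.toAdd (μ h) ((Pi.single i (y1 t) : ∀ i, L i) • w t) := by
        intro t ht
        rw [smul_smul, hF1 t k h hh hsm, hsemi h _ (w t), hw t h hh]
      rw [Finset.sum_congr rfl this, ← map_sum, hy1Rel.2, map_zero]
    · have : ∀ t ∈ s, (Pi.single k 1 : ∀ i, L i) • (x t • w t) = 0 := by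
        intro t ht
        rw [smul_smul, hF2 t k hk, zero_smul]
      rw [Finset.sum_congr rfl this, Finset.sum_const_zero]
  -- conclude
  have hA := hli s (fun t => (⟨x t, hF3 t⟩ : ↥(fixedSubring (L := L) H)))
    (by
      have : ∀ t ∈ s, (⟨x t, hF3 t⟩ : ↥(fixedSubring (L := L) H)) • w t = x t • w t :=
        fun t _ => rfl
      rw [Finset.sum_congr rfl this, hF5]) t₁ ht₁s
  have : x t₁ = 0 := by
    simpa [Subtype.ext_iff] using hA
  have := congrFun this i
  rw [hF4 t₁, hy1t₁] at this
  exact one_ne_zero this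

end Artin

section Orbit
variable {I : Type*} [DecidableEq I] {L : I → Type*} [∀ i, Field (L i)]
variable {G : Type*} [Group G] [MulSemiringAction G (∀ i, L i)]

/-- The orbit equivalence relation of `H` on the index set `I`. -/
def orbSetoid (H : Subgroup G) (L : I → Type*) [∀ i, Field (L i)]
    [MulSemiringAction G (∀ i, L i)] : Setoid I where
  r i j := ∃ h ∈ H, h • (Pi.single i 1 : ∀ i, L i) = Pi.single j 1
  iseqv := by
    constructor
    · intro i; exact ⟨1, H.one_mem, one_smul _ _⟩
    · rintro i j ⟨h, hh, hs⟩
      exact ⟨h⁻¹, H.inv_mem hh, by rw [← hs, inv_smul_smul]⟩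
    · rintro i j k ⟨h, hh, hs⟩ ⟨h', hh', hs'⟩
      exact ⟨h' * h, H.mul_mem hh' hh, by rw [mul_smul, hs, hs']⟩

/-- A choice of representatives for the `H`-orbits on `I`. -/
noncomputable def repIdx (H : Subgroup G) (L : I → Type*) [∀ i, Field (L i)]
    [MulSemiringAction G (∀ i, L i)] (i : I) : I :=
  (Quotient.mk (orbSetoid (G := G) H L) i).out

lemma repIdx_rel (H : Subgroup G) (i : I) :
    ∃ h ∈ H, h • (Pi.single (repIdx (G := G) H L i) 1 : ∀ i, L i) = Pi.single i 1 :=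
  Quotient.exact (Quotient.out_eq (Quotient.mk (orbSetoid (G := G) H L) i))

lemma repIdx_eq_of_rel (H : Subgroup G) {i j : I}
    (hij : ∃ h ∈ H, h • (Pi.single i 1 : ∀ i, L i) = Pi.single j 1) :
    repIdx (G := G) H L i = repIdx (G := G) H L j := by
  unfold repIdx
  rw [Quotient.sound (a := i) (b := j) hij]

end Orbit

section Construction
variable {I : Type*} [DecidableEq I] {L : I → Type*} [∀ i, Field (L i)]
variable {G : Type*} [Group G] [MulSemiringAction G (∀ i, L i)]
variable {H : Subgroup G}
variable {V : Type*} [AddCommGroup V] [Module (∀ i, L i) V]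
variable {μ : G →* Multiplicative (AddAut V)}

/-- If the `H`-invariants span `V` over `F`, there is a family of `r` invariant
vectors which is `F`-linearly independent (in fact an `F`-basis). -/
lemma exists_good_family
    (hsemi : ∀ (g : G) (a : ∀ i, L i) (v : V), Multiplicative.toAdd (μ g) (a • v) = (g • a) • Multiplicative.toAdd (μ g) v)
    {r : ℕ} (b : Module.Basis (Fin r) (∀ i, L i) V)
    (hinj : ∀ v : V, (∀ i : I, (Pi.single i (1 : L i) : ∀ i, L i) • v = 0) → v = 0)
    (hsurj : ∀ f : I → V,
      (∀ i, ∃ v : V, f i = (Pi.single i (1 : L i) : ∀ i, L i) • v) →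
      ∃ v : V, ∀ i, (Pi.single i (1 : L i) : ∀ i, L i) • v = f i)
    (hspan : Submodule.span (∀ i, L i) ((invariants H μ hsemi : Set V)) = ⊤) :
    ∃ v : Fin r → V, (∀ t, v t ∈ invariants H μ hsemi) ∧
      LinearIndependent (∀ i, L i) v := by
  classical
  -- Step 1: a finite spanning set of invariants
  obtain ⟨T, hTmem, hTspan⟩ : ∃ T : Finset V,
      (↑T ⊆ (invariants H μ hsemi : Set V)) ∧
      Submodule.span (∀ i, L i) (↑T : Set V) = ⊤ := by
    have hb : ∀ k : Fin r, ∃ T : Finset V, (↑T ⊆ (invariants H μ hsemi : Set V)) ∧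
        b k ∈ Submodule.span (∀ i, L i) (↑T : Set V) := by
      intro k
      have : b k ∈ Submodule.span (∀ i, L i) ((invariants H μ hsemi : Set V)) := by
        rw [hspan]; trivial
      exact Submodule.mem_span_finite_of_mem_span this
    choose T hT1 hT2 using hb
    refine ⟨Finset.univ.biUnion T, ?_, ?_⟩
    · intro x hx
      rw [Finset.coe_biUnion] at hx
      simp only [Set.mem_iUnion] at hx
      obtain ⟨k, _, hk⟩ := hx
      exact hT1 k hk
    · rw [eq_top_iff, ← b.span_eq, Submodule.span_le]
      rintro x ⟨k, rfl⟩
      refine Submodule.span_mono ?_ (hT2 k)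
      intro y hy
      rw [Finset.coe_biUnion]
      simp only [Set.mem_iUnion]
      exact ⟨k, Finset.mem_univ k, hy⟩
  set m := T.card with hmdef
  set w : Fin m → V := fun j => ((T.equivFin.symm j : V)) with hwdef
  have hwmem : ∀ j, w j ∈ invariants H μ hsemi := fun j => hTmem (T.equivFin.symm j).2
  have hwspan : Submodule.span (∀ i, L i) (Set.range w) = ⊤ := by
    have hwrange : Set.range w = ↑T := by
      ext x
      constructor
      · rintro ⟨j, rfl⟩
        exact (T.equivFin.symm j).2
      · intro hx
        exact ⟨T.equivFin ⟨x, hx⟩, by rw [hwdef]; simp⟩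
    rw [hwrange]; exact hTspan
  -- Step 2: at each index, select an independent subfamily of size r
  have hsel : ∀ i₀ : I, ∃ g : Fin r → Fin m,
      LinearIndependent (L i₀) (fun t => pc b i₀ (w (g t))) := by
    intro i₀
    have hspan' : Submodule.span (L i₀) (Set.range fun j => pc b i₀ (w j)) = ⊤ := by
      rw [eq_top_iff]
      rintro z -
      set v₀ : V := ∑ k, (Pi.single i₀ (z k) : ∀ i, L i) • b k with hv₀def
      have hzpc : pc b i₀ v₀ = z := by
        funext k'
        rw [hv₀def, pc_sum]
        rw [Finset.sum_apply]
        have hterm : ∀ k, pc b i₀ ((Pi.single i₀ (z k) : ∀ i, L i) • b k) k'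
            = if k = k' then z k' else 0 := by
          intro k
          rw [pc_smul]
          have h1 : pc b i₀ (b k) k' = if k = k' then 1 else 0 := by
            simp only [pc, Module.Basis.repr_self]
            rw [Finsupp.single_apply]
            split
            · rename_i h; subst h; simp
            · simp
          have : (Pi.single i₀ (z k) : ∀ i, L i) i₀ • pc b i₀ (b k) k'
              = z k * pc b i₀ (b k) k' := by
            rw [Pi.single_eq_same]; rfl
          show ((Pi.single i₀ (z k) : ∀ i, L i) i₀ • pc b i₀ (b k)) k' = _
          rw [Pi.smul_apply, this, h1]
          split
          · rename_i h; subst h; simp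
          · simp
        rw [Finset.sum_congr rfl fun k _ => hterm k]
        simp
      obtain ⟨c, hc⟩ := (Submodule.mem_span_range_iff_exists_fun _).mp
        (by rw [hwspan]; trivial : v₀ ∈ Submodule.span (∀ i, L i) (Set.range w))
      have hz2 : z = ∑ j, c j i₀ • pc b i₀ (w j) := by
        rw [← hzpc, ← hc, pc_sum]
        refine Finset.sum_congr rfl fun j _ => ?_
        rw [pc_smul]
      rw [hz2]
      exact Submodule.sum_mem _ fun j _ =>
        Submodule.smul_mem _ _ (Submodule.subset_span ⟨j, rfl⟩)
    obtain ⟨sb, hsb_sub, hsb_span, hsb_li⟩ := exists_linearIndependent (L i₀)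
      (Set.range fun j => pc b i₀ (w j))
    rw [hspan'] at hsb_span
    have hfin : sb.Finite := hsb_li.setFinite
    have : Fintype sb := hfin.fintype
    let B0 : Module.Basis sb (L i₀) (Fin r → L i₀) :=
      Module.Basis.mk hsb_li (by rw [Subtype.range_coe, hsb_span])
    have hcard : Fintype.card sb = r := by
      have h1 := Module.finrank_eq_card_basis B0
      rw [Module.finrank_fin_fun] at h1
      exact h1.symm
    let e : Fin r ≃ sb := (Fintype.equivFinOfCardEq hcard).symm
    have hchoice : ∀ t : Fin r, ∃ j : Fin m, pc b i₀ (w j) = (e t : Fin r → L i₀) := by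
      intro t
      obtain ⟨j, hj⟩ := hsb_sub (e t).2
      exact ⟨j, hj⟩
    choose g hg using hchoice
    refine ⟨g, ?_⟩
    have heq : (fun t => pc b i₀ (w (g t))) = (fun x : sb => (x : Fin r → L i₀)) ∘ e := by
      funext t
      rw [hg t]
      rfl
    rw [heq]
    exact hsb_li.comp e e.injective
  -- Step 3: glue the selections into invariant vectors
  choose g hg using hsel
  set Gf : I → Fin r → Fin m := fun i => g (repIdx (G := G) H L i) with hGfdef
  have hGf_orbit : ∀ (h : G), h ∈ H → ∀ i : I,
      Gf (sigmaIdx (L := L) h⁻¹ i) = Gf i := by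
    intro h hh i
    have hrep : repIdx (G := G) H L (sigmaIdx (L := L) h⁻¹ i) = repIdx (G := G) H L i :=
      repIdx_eq_of_rel H ⟨h, hh, by rw [← sigmaIdx_spec h⁻¹ i, smul_inv_smul]⟩
    rw [hGfdef]
    simp only
    rw [hrep]
  have hex : ∀ t : Fin r, ∃ v : V, ∀ i,
      (Pi.single i 1 : ∀ i, L i) • v = (Pi.single i 1 : ∀ i, L i) • w (Gf i t) := by
    intro t
    obtain ⟨v, hv⟩ := hsurj (fun i => (Pi.single i 1 : ∀ i, L i) • w (Gf i t))
      (fun i => ⟨w (Gf i t), rfl⟩)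
    exact ⟨v, hv⟩
  choose vfam hvfam using hex
  have hmem : ∀ t, vfam t ∈ invariants H μ hsemi := by
    intro t
    intro h hh
    have hptwise : ∀ i, (Pi.single i 1 : ∀ i, L i) • (Multiplicative.toAdd (μ h) (vfam t) - vfam t) = 0 := by
      intro i
      rw [smul_sub]
      set i' := sigmaIdx (L := L) h⁻¹ i with hi'def
      have hσ : h⁻¹ • (Pi.single i 1 : ∀ i, L i) = Pi.single i' 1 := sigmaIdx_spec h⁻¹ i
      have hσ' : h • (Pi.single i' 1 : ∀ i, L i) = Pi.single i 1 := by
        rw [← hσ, smul_inv_smul]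
      have h1 : (Pi.single i 1 : ∀ i, L i) • Multiplicative.toAdd (μ h) (vfam t)
          = Multiplicative.toAdd (μ h) ((Pi.single i' 1 : ∀ i, L i) • vfam t) := by
        rw [hsemi h _ (vfam t), hσ']
      rw [h1, hvfam t i', hGf_orbit h hh i, hsemi h _ _, hσ',
        (hwmem (Gf i t) h hh : Multiplicative.toAdd (μ h) (w (Gf i t)) = w (Gf i t)), hvfam t i, sub_self]
    have := hinj _ hptwise
    exact sub_eq_zero.mp this
  have hcomp : ∀ i, LinearIndependent (L i) (fun t => pc b i (vfam t)) := by
    intro i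
    have hpc_eq : ∀ t, pc b i (vfam t) = pc b i (w (Gf i t)) := by
      intro t
      rw [← pc_single_smul b i (vfam t), hvfam t i, pc_single_smul]
    rw [show (fun t => pc b i (vfam t)) = fun t => pc b i (w (Gf i t)) from funext hpc_eq]
    set i₀ := repIdx (G := G) H L i with hi₀def
    obtain ⟨h, hh, hs⟩ := repIdx_rel (L := L) H i
    have hGfi : Gf i = g i₀ := rfl
    have hinv : h⁻¹ • (Pi.single i 1 : ∀ i, L i) = Pi.single i₀ 1 := by
      rw [← hs, inv_smul_smul]
    rw [Fintype.linearIndependent_iff]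
    intro c hc
    set u : V := ∑ t, (Pi.single i (c t) : ∀ i, L i) • w (Gf i t) with hudef
    have hpcu : pc b i u = 0 := by
      rw [hudef, pc_sum]
      funext k
      rw [Finset.sum_apply]
      have : ∀ t, pc b i ((Pi.single i (c t) : ∀ i, L i) • w (Gf i t)) k
          = (c t • pc b i (w (Gf i t))) k := by
        intro t
        rw [pc_smul]
        show ((Pi.single i (c t) : ∀ i, L i) i • pc b i (w (Gf i t))) k = _
        rw [Pi.single_eq_same]
      rw [Finset.sum_congr rfl fun t _ => this t]
      have := congrFun hc k
      rw [Finset.sum_apply] at this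
      simpa using this
    have hu0 : u = 0 := by
      have h1 : (Pi.single i 1 : ∀ i, L i) • u = 0 := (pc_eq_zero_iff b i u).mp hpcu
      have h2 : (Pi.single i 1 : ∀ i, L i) • u = u := by
        rw [hudef, Finset.smul_sum]
        refine Finset.sum_congr rfl fun t _ => ?_
        rw [smul_smul, single_mul_single, one_mul]
      rw [← h2, h1]
    set c' : Fin r → L i₀ := fun t => ((h⁻¹ : G) • (Pi.single i (c t) : ∀ i, L i)) i₀
      with hc'def
    have hc'single : ∀ t, (h⁻¹ : G) • (Pi.single i (c t) : ∀ i, L i)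
        = Pi.single i₀ (c' t) := by
      intro t
      have h0 : (Pi.single i (c t) : ∀ i, L i) = Pi.single i 1 * Pi.single i (c t) := by
        rw [single_mul_single, one_mul]
      have h1 : (h⁻¹ : G) • (Pi.single i (c t) : ∀ i, L i)
          = (Pi.single i₀ 1 : ∀ i, L i) * ((h⁻¹ : G) • (Pi.single i (c t) : ∀ i, L i)) := by
        calc (h⁻¹ : G) • (Pi.single i (c t) : ∀ i, L i)
            = (h⁻¹ : G) • ((Pi.single i 1 : ∀ i, L i) * Pi.single i (c t)) := by rw [← h0]
        _ = ((h⁻¹ : G) • (Pi.single i 1 : ∀ i, L i))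
              * ((h⁻¹ : G) • (Pi.single i (c t) : ∀ i, L i)) := smul_mul' _ _ _
        _ = _ := by rw [hinv]
      rw [h1, single_one_mul]
    have h3 : ∑ t, (Pi.single i₀ (c' t) : ∀ i, L i) • w (Gf i t) = 0 := by
      have hμ : Multiplicative.toAdd (μ h⁻¹) u = 0 := by rw [hu0, map_zero]
      rw [hudef] at hμ
      rw [map_sum] at hμ
      have : ∀ t, Multiplicative.toAdd (μ h⁻¹) ((Pi.single i (c t) : ∀ i, L i) • w (Gf i t))
          = (Pi.single i₀ (c' t) : ∀ i, L i) • w (Gf i t) := by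
        intro t
        rw [hsemi h⁻¹ _ _, hc'single t, (hwmem (Gf i t) h⁻¹ (H.inv_mem hh) :
          Multiplicative.toAdd (μ h⁻¹) (w (Gf i t)) = w (Gf i t))]
      rw [Finset.sum_congr rfl fun t _ => this t] at hμ
      exact hμ
    have h4 : ∑ t, c' t • pc b i₀ (w (g i₀ t)) = 0 := by
      have : pc b i₀ (∑ t, (Pi.single i₀ (c' t) : ∀ i, L i) • w (Gf i t)) = 0 := by
        rw [h3, pc_zero]
      rw [pc_sum] at this
      rw [← this]
      refine Finset.sum_congr rfl fun t _ => ?_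
      rw [pc_smul, hGfi]
      funext k
      show (c' t • pc b i₀ (w (g i₀ t))) k
        = ((Pi.single i₀ (c' t) : ∀ i, L i) i₀ • pc b i₀ (w (g i₀ t))) k
      rw [Pi.single_eq_same]
    have hc'0 := Fintype.linearIndependent_iff.mp (hg i₀) c' h4
    intro t
    have : (h⁻¹ : G) • (Pi.single i (c t) : ∀ i, L i) = 0 := by
      rw [hc'single t, hc'0 t]
      simp
    have h5 : (Pi.single i (c t) : ∀ i, L i) = 0 := by
      have := congrArg (fun z => h • z) this
      simpa [smul_inv_smul] using this
    have := congrFun h5 i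
    simpa using this
  refine ⟨vfam, hmem, ?_⟩
  rw [Fintype.linearIndependent_iff]
  intro x hx
  intro t
  funext i
  show x t i = 0
  have hpc0 : ∑ t', x t' i • pc b i (vfam t') = 0 := by
    have := congrArg (pc b i) hx
    rw [pc_sum, pc_zero] at this
    rw [← this]
    refine Finset.sum_congr rfl fun t' _ => ?_
    rw [pc_smul]
  exact Fintype.linearIndependent_iff.mp (hcomp i) (fun t' => x t' i) hpc0 t

end Construction

theorem natMap_bijective_tfae'
    {I : Type*} [DecidableEq I] {L : I → Type*} [∀ i, Field (L i)]
    {G : Type*} [Group G] [MulSemiringAction G (∀ i, L i)]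
    (H : Subgroup G)
    (htrans : ∀ i j : I, ∃ g : G,
      g • (Pi.single i (1 : L i) : ∀ i, L i) = Pi.single j (1 : L j))
    (hGL : ∀ (g : G) (x : ∀ i, L i),
      x ∈ fixedSubring (L := L) H → g • x ∈ fixedSubring (L := L) H)
    {V : Type*} [AddCommGroup V] [Module (∀ i, L i) V]
    (μ : G →* Multiplicative (AddAut V))
    (hsemi : ∀ (g : G) (a : ∀ i, L i) (v : V), Multiplicative.toAdd (μ g) (a • v) = (g • a) • Multiplicative.toAdd (μ g) v)
    (r : ℕ) (b : Module.Basis (Fin r) (∀ i, L i) V)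
    (hinj : ∀ v : V, (∀ i : I, (Pi.single i (1 : L i) : ∀ i, L i) • v = 0) → v = 0)
    (hsurj : ∀ f : I → V,
      (∀ i, ∃ v : V, f i = (Pi.single i (1 : L i) : ∀ i, L i) • v) →
      ∃ v : V, ∀ i, (Pi.single i (1 : L i) : ∀ i, L i) • v = f i) :
    (Function.Bijective (natMap H μ hsemi) ↔
      Submodule.span (∀ i, L i) ((invariants H μ hsemi : Set V)) = ⊤) ∧
    (Submodule.span (∀ i, L i) ((invariants H μ hsemi : Set V)) = ⊤ ↔
      Module.rank (fixedSubring (L := L) H) (invariants H μ hsemi) =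
        Module.rank (∀ i, L i) V) := by
  classical
  have natMap_tmul : ∀ (a : ∀ i, L i) (w : invariants H μ hsemi),
      natMap H μ hsemi (a ⊗ₜ w) = a • (w : V) := by
    intro a w
    simp [natMap]
  have range_sub : ∀ z, natMap H μ hsemi z ∈
      Submodule.span (∀ i, L i) ((invariants H μ hsemi : Set V)) := by
    intro z
    induction z using TensorProduct.induction_on with
    | zero => simp
    | tmul a w =>
      rw [natMap_tmul]
      exact Submodule.smul_mem _ _ (Submodule.subset_span w.2)
    | add u v hu hv =>
      rw [map_add]
      exact add_mem hu hv
  have part1 : Function.Bijective (natMap H μ hsemi) ↔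
      Submodule.span (∀ i, L i) ((invariants H μ hsemi : Set V)) = ⊤ := by
    constructor
    · intro hbij
      rw [eq_top_iff]
      intro v _
      obtain ⟨t, ht⟩ := hbij.2 v
      rw [← ht]
      exact range_sub t
    · intro hspan
      obtain ⟨vfam, hmem, hli⟩ := exists_good_family hsemi b hinj hsurj hspan
      have hspanv := span_top_of_linearIndependent b vfam hli
      let B : Module.Basis (Fin r) (∀ i, L i) V := Module.Basis.mk hli (by rw [hspanv])
      have hB : ∀ t, B t = vfam t := fun t => by rw [Module.Basis.mk_apply]
      have hFindep := Fintype.linearIndependent_iff.mp hli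
      -- the F-scalar action on the tensor product
      have hsmulmap : ∀ (a : ∀ i, L i) z,
          natMap H μ hsemi (a • z) = a • natMap H μ hsemi z := by
        intro a z
        induction z using TensorProduct.induction_on with
        | zero => simp
        | tmul c w =>
          rw [TensorProduct.smul_tmul', natMap_tmul, natMap_tmul, smul_eq_mul, mul_smul]
        | add u v hu hv =>
          rw [smul_add, map_add, map_add, hu, hv, smul_add]
      -- surjectivity
      have hsurjN : Function.Surjective (natMap H μ hsemi) := by
        let W : Submodule (∀ i, L i) V :=
          { carrier := Set.range (natMap H μ hsemi)
            add_mem' := by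
              rintro _ _ ⟨z1, rfl⟩ ⟨z2, rfl⟩
              exact ⟨z1 + z2, map_add _ _ _⟩
            zero_mem' := ⟨0, map_zero _⟩
            smul_mem' := by
              rintro a _ ⟨z, rfl⟩
              exact ⟨a • z, hsmulmap a z⟩ }
        have hle : Submodule.span (∀ i, L i) ((invariants H μ hsemi : Set V)) ≤ W := by
          rw [Submodule.span_le]
          intro v hv
          exact ⟨(1 : ∀ i, L i) ⊗ₜ ⟨v, hv⟩, by rw [natMap_tmul]; exact one_smul _ _⟩
        intro v
        have : v ∈ W := hle (by rw [hspan]; trivial)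
        exact this
      -- coordinates of invariant vectors are H-fixed
      have hcoordK : ∀ (v : V), v ∈ invariants H μ hsemi → ∀ t : Fin r,
          B.repr v t ∈ fixedSubring (L := L) H := by
        intro v hv t h hh
        have hexp : ∑ t', B.repr v t' • vfam t' = v := by
          have := B.sum_repr v
          rw [Finset.sum_congr rfl (fun t' _ => by rw [hB t'])] at this
          exact this
        have h1 : Multiplicative.toAdd (μ h) v = ∑ t', (h • B.repr v t') • vfam t' := by
          conv_lhs => rw [← hexp]
          rw [map_sum]
          refine Finset.sum_congr rfl fun t' _ => ?_
          rw [hsemi h _ _, hmem t' h hh]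
        have h2 : Multiplicative.toAdd (μ h) v = v := hv h hh
        have h3 : ∑ t', (h • B.repr v t' - B.repr v t') • vfam t' = 0 := by
          rw [Finset.sum_congr rfl (fun t' _ => sub_smul (h • B.repr v t') (B.repr v t')
            (vfam t')), Finset.sum_sub_distrib, ← h1, h2, hexp, sub_self]
        have := hFindep _ h3 t
        exact sub_eq_zero.mp this
      -- normal form in the tensor product
      have hnf : ∀ z : TensorProduct (fixedSubring (L := L) H) (∀ i, L i)
          (invariants H μ hsemi), ∃ c : Fin r → ∀ i, L i,
          z = ∑ t, c t ⊗ₜ[fixedSubring (L := L) H]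
            (⟨vfam t, hmem t⟩ : invariants H μ hsemi) := by
        intro z
        induction z using TensorProduct.induction_on with
        | zero => exact ⟨0, by simp⟩
        | tmul a v =>
          refine ⟨fun t => B.repr (v : V) t * a, ?_⟩
          have hv_eq : v = ∑ t, (⟨B.repr (v : V) t, hcoordK (v : V) v.2 t⟩ :
              fixedSubring (L := L) H) • (⟨vfam t, hmem t⟩ : invariants H μ hsemi) := by
            apply Subtype.ext
            rw [Submodule.coe_sum]
            have : ∀ t : Fin r, (((⟨B.repr (v : V) t, hcoordK (v : V) v.2 t⟩ :
                fixedSubring (L := L) H) • (⟨vfam t, hmem t⟩ :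
                invariants H μ hsemi) : invariants H μ hsemi) : V)
                = B.repr (v : V) t • vfam t := fun t => rfl
            rw [Finset.sum_congr rfl fun t _ => this t]
            have := B.sum_repr (v : V)
            rw [Finset.sum_congr rfl (fun t' _ => by rw [hB t'])] at this
            exact this.symm
          calc a ⊗ₜ[fixedSubring (L := L) H] v
              = a ⊗ₜ[fixedSubring (L := L) H] (∑ t, (⟨B.repr (v : V) t, _⟩ :
                fixedSubring (L := L) H) • (⟨vfam t, hmem t⟩ :
                invariants H μ hsemi)) := by rw [← hv_eq]
          _ = ∑ t, a ⊗ₜ[fixedSubring (L := L) H] ((⟨B.repr (v : V) t, _⟩ :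
                fixedSubring (L := L) H) • (⟨vfam t, hmem t⟩ :
                invariants H μ hsemi)) := TensorProduct.tmul_sum _ _ _
          _ = ∑ t, (B.repr (v : V) t * a) ⊗ₜ[fixedSubring (L := L) H]
                (⟨vfam t, hmem t⟩ : invariants H μ hsemi) := by
              refine Finset.sum_congr rfl fun t _ => ?_
              rw [← TensorProduct.smul_tmul]
              rfl
        | add u v hu hv =>
          obtain ⟨c1, rfl⟩ := hu
          obtain ⟨c2, rfl⟩ := hv
          refine ⟨c1 + c2, ?_⟩
          rw [← Finset.sum_add_distrib]
          refine Finset.sum_congr rfl fun t _ => ?_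
          rw [Pi.add_apply, TensorProduct.add_tmul]
      -- injectivity
      have hinjN : Function.Injective (natMap H μ hsemi) := by
        rw [injective_iff_map_eq_zero]
        intro z hz
        obtain ⟨c, rfl⟩ := hnf z
        rw [map_sum] at hz
        have hz' : ∑ t, c t • vfam t = 0 := by
          have heach : ∀ t : Fin r, natMap H μ hsemi (c t ⊗ₜ[fixedSubring (L := L) H]
              (⟨vfam t, hmem t⟩ : invariants H μ hsemi)) = c t • vfam t :=
            fun t => natMap_tmul (c t) _
          rw [Finset.sum_congr rfl fun t _ => heach t] at hz
          exact hz
        have hc0 := hFindep c hz'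
        have hzero : ∀ t : Fin r, c t ⊗ₜ[fixedSubring (L := L) H]
            (⟨vfam t, hmem t⟩ : invariants H μ hsemi) = 0 := by
          intro t
          rw [hc0 t, TensorProduct.zero_tmul]
        rw [Finset.sum_congr rfl fun t _ => hzero t, Finset.sum_const_zero]
      exact ⟨hinjN, hsurjN⟩
  refine ⟨part1, ?_⟩
  -- Part 2
  rcases isEmpty_or_nonempty I with hI | hI
  · have hFsub : Subsingleton (∀ i, L i) := ⟨fun a b => funext fun i => (hI.elim i)⟩
    have hKsub : Subsingleton ↥(fixedSubring (L := L) H) :=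
      ⟨fun a b => Subtype.ext (Subsingleton.elim _ _)⟩
    have hVsub : Subsingleton V := Module.subsingleton (∀ i, L i) V
    constructor
    · intro _
      rw [rank_subsingleton, rank_subsingleton]
    · intro _
      ext x
      simp [Subsingleton.elim x 0]
  · have hnontriv : Nontrivial (∀ i, L i) :=
      ⟨0, 1, fun h0 => one_ne_zero (congrFun h0 (Classical.arbitrary I)).symm⟩
    have hrankV : Module.rank (∀ i, L i) V = r := by
      rw [rank_eq_card_basis b]
      simp
    have hrank_le : Module.rank (fixedSubring (L := L) H) (invariants H μ hsemi)
        ≤ (r : Cardinal) := by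
      apply rank_le
      intro s hs
      have hsV : LinearIndependent (fixedSubring (L := L) H)
          (fun x : s => ((x : invariants H μ hsemi) : V)) :=
        hs.map' ((invariants H μ hsemi).subtype) (Submodule.ker_subtype _)
      have hsF : LinearIndependent (∀ i, L i)
          (fun x : s => ((x : invariants H μ hsemi) : V)) :=
        artin hsemi hinj _ (fun x => (x : invariants H μ hsemi).2) hsV
      have hcard := hsF.cardinal_le_rank
      rw [hrankV] at hcard
      rw [Cardinal.mk_coe_finset] at hcard
      exact_mod_cast hcard
    constructor
    · intro hspan
      obtain ⟨vfam, hmem, hli⟩ := exists_good_family hsemi b hinj hsurj hspan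
      have hliK : LinearIndependent (fixedSubring (L := L) H)
          (fun t => (⟨vfam t, hmem t⟩ : invariants H μ hsemi)) := by
        rw [Fintype.linearIndependent_iff]
        intro c hc t
        have hcV : ∑ t', ((c t' : ∀ i, L i)) • vfam t' = 0 := by
          have := congrArg (fun z : invariants H μ hsemi => (z : V)) hc
          simp [Submodule.coe_sum] at this; exact this
        have := Fintype.linearIndependent_iff.mp hli (fun t' => (c t' : ∀ i, L i)) hcV t
        exact Subtype.ext this
      have hge : (r : Cardinal) ≤
          Module.rank (fixedSubring (L := L) H) (invariants H μ hsemi) := by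
        have := hliK.cardinal_lift_le_rank
        simpa using this
      rw [hrankV]
      exact le_antisymm hrank_le hge
    · intro hrk
      have hge : (r : Cardinal) ≤
          Module.rank (fixedSubring (L := L) H) (invariants H μ hsemi) := by
        rw [hrk, hrankV]
      obtain ⟨f, hf⟩ := exists_linearIndependent_of_le_rank hge
      have hfV : LinearIndependent (fixedSubring (L := L) H)
          (fun t => ((f t : invariants H μ hsemi) : V)) :=
        hf.map' ((invariants H μ hsemi).subtype) (Submodule.ker_subtype _)
      have hfF : LinearIndependent (∀ i, L i)
          (fun t => ((f t : invariants H μ hsemi) : V)) :=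
        artin hsemi hinj _ (fun t => (f t : invariants H μ hsemi).2) hfV
      have hspanf := span_top_of_linearIndependent b _ hfF
      rw [eq_top_iff, ← hspanf]
      apply Submodule.span_mono
      rintro _ ⟨t, rfl⟩
      exact (f t : invariants H μ hsemi).2

/-- In the setting of Statement 9 (`F = ∏ᵢ Lᵢ` a product of
fields with `G`-action transitive on principal idempotents, `H ≤ G` with
`L = F^H` stable under `G`, and `V` an `F ⋊ G`-module free of finite rank over
`F` with `V ≅ ∏ᵢ eᵢ·V`), the following are equivalent:
(a) the natural map `F ⊗_L V^H → V` is an isomorphism;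
(b) `F · V^H = V`;
(c) `rank_L V^H = rank_F V`. -/
theorem natMap_bijective_tfae
    {I : Type*} [DecidableEq I] {L : I → Type*} [∀ i, Field (L i)]
    {G : Type*} [Group G] [MulSemiringAction G (∀ i, L i)]
    (H : Subgroup G)
    (htrans : ∀ i j : I, ∃ g : G,
      g • (Pi.single i (1 : L i) : ∀ i, L i) = Pi.single j (1 : L j))
    (hGL : ∀ (g : G) (x : ∀ i, L i),
      x ∈ fixedSubring (L := L) H → g • x ∈ fixedSubring (L := L) H)
    {V : Type*} [AddCommGroup V] [Module (∀ i, L i) V]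
    (μ : G →* Multiplicative (AddAut V))
    (hsemi : ∀ (g : G) (a : ∀ i, L i) (v : V), Multiplicative.toAdd (μ g) (a • v) = (g • a) • Multiplicative.toAdd (μ g) v)
    (r : ℕ) (b : Module.Basis (Fin r) (∀ i, L i) V)
    (hinj : ∀ v : V, (∀ i : I, (Pi.single i (1 : L i) : ∀ i, L i) • v = 0) → v = 0)
    (hsurj : ∀ f : I → V,
      (∀ i, ∃ v : V, f i = (Pi.single i (1 : L i) : ∀ i, L i) • v) →
      ∃ v : V, ∀ i, (Pi.single i (1 : L i) : ∀ i, L i) • v = f i) :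
    (Function.Bijective (natMap H μ hsemi) ↔
      Submodule.span (∀ i, L i) ((invariants H μ hsemi : Set V)) = ⊤) ∧
    (Submodule.span (∀ i, L i) ((invariants H μ hsemi : Set V)) = ⊤ ↔
      Module.rank (fixedSubring (L := L) H) (invariants H μ hsemi) =
        Module.rank (∀ i, L i) V) := by
  exact natMap_bijective_tfae' H htrans hGL μ hsemi r b hinj hsurj
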